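/- arXiv:1710.02159 — 3 statements merged into one kernel-verified Lean document; each statement's English description precedes it below -/
import Mathlib

section
/- Fix α ∈ (−∞,1) and a deterministic arrival-time sequence t such that t_k · k^{−1/σ} → μ_σ ∈ (0,∞) as k → ∞ for some σ ∈ (0,1]. Let Ψ_1 = 1 and Ψ_j ∼ Beta(1−α, t_j − 1 − (j−1)α) for j ≥ 2 be mutually independent, and W_{j,k} := ∏_{i=j+1}^{k} (1 − Ψ_i). Then for each j ≥ 1, W_{j,k} converges almost surely as k → ∞ to a random variable W_{j,∞}; moreover W_{j,∞} = 0 almost surely if σ = 1, and W_{j,∞} > 0 almost surely if σ < 1. -/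
/-!
The factors `1 - Ψ_i` lie in `(0,1)` almost surely, so the products `W_{j,k}` decrease to a limit.
The means `m_i = 𝔼 Ψ_i = (1-α)/(t_i - iα)` are comparable to `1/t_i`, hence to `i^{-1/σ}`, so
`∑ m_i` diverges exactly in the linear regime. If it diverges, independence gives
`𝔼 W_{j,k} = ∏ (1 - m_i) ≤ exp (-∑ m_i) → 0`, and the limit vanishes almost surely. If it
converges, `∑ Ψ_i < ∞` almost surely, and then `∏ (1 - Ψ_i) = exp (∑ log (1 - Ψ_i)) > 0`.
-/

open MeasureTheory ProbabilityTheory Filter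
open scoped ENNReal Topology Classical

noncomputable section

/-- Number of indices `i ∈ [1,m]` with `l i = j`. -/
def ncount (l : ℕ → ℕ) (m j : ℕ) : ℕ := ((Finset.Icc 1 m).filter (fun i => l i = j)).card

/-- Maximum of `l` over `[1,m]` (the number of distinct values for a label sequence). -/
def kmaxf (l : ℕ → ℕ) (m : ℕ) : ℕ := (Finset.Icc 1 m).sup l

/-- Cylinder event: the process agrees with `l` on `[1,n]`. -/
def cylEvent {Ω : Type*} (L : ℕ → Ω → ℕ) (n : ℕ) (l : ℕ → ℕ) : Set Ω :=
  {ω | ∀ i, 1 ≤ i → i ≤ n → L i ω = l i}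

/-- A deterministic arrival-time sequence: `t 1 = 1` and strictly increasing (indices `≥ 1`). -/
def IsArrivalSeq (t : ℕ → ℕ) : Prop := t 1 = 1 ∧ ∀ k, 1 ≤ k → t k < t (k + 1)

/-- An `(α,t)`-process with deterministic arrival times `t`: `L (t k) = k` a.s., and at any
non-arrival time the next label is drawn from the `α`-degree-biased distribution on the
currently present labels, expressed through finite-dimensional (cylinder) probabilities. -/
def IsAlphaTProcess {Ω : Type*} [MeasureSpace Ω] (α : ℝ) (t : ℕ → ℕ) (L : ℕ → Ω → ℕ) : Prop :=
  (∀ n, Measurable (L n)) ∧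
  (∀ k, 1 ≤ k → ∀ᵐ ω, L (t k) ω = k) ∧
  (∀ n, 1 ≤ n → (∀ k, 1 ≤ k → t k ≠ n + 1) →
    ∀ j, 1 ≤ j → ∀ l : ℕ → ℕ, j ≤ kmaxf l n →
      ℙ (cylEvent L n l ∩ {ω | L (n + 1) ω = j})
        = ENNReal.ofReal (((ncount l n j : ℝ) - α) / ((n : ℝ) - α * (kmaxf l n : ℝ))) *
            ℙ (cylEvent L n l))

/-- The beta distribution on `(0,1)` with parameters `a, b`. -/
def betaMeasureAux (a b : ℝ) : Measure ℝ :=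
  (volume.restrict (Set.Ioo (0 : ℝ) 1)).withDensity fun x =>
    ENNReal.ofReal (Real.Gamma (a + b) / (Real.Gamma a * Real.Gamma b) * x ^ (a - 1) * (1 - x) ^ (b - 1))

/-- Degree of vertex `j` after `n` draws (number of edge ends at `j`). -/
def degRV {Ω : Type*} (L : ℕ → Ω → ℕ) (n j : ℕ) (ω : Ω) : ℕ := ncount (fun i => L i ω) n j

/-- Number of vertices after `n` draws. -/
def kRV {Ω : Type*} (L : ℕ → Ω → ℕ) (n : ℕ) (ω : Ω) : ℕ := kmaxf (fun i => L i ω) n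

/-- Number of vertices of degree `d` after `n` draws. -/
def mdRV {Ω : Type*} (L : ℕ → Ω → ℕ) (n d : ℕ) (ω : Ω) : ℕ :=
  ((Finset.Icc 1 (kRV L n ω)).filter (fun j => degRV L n j ω = d)).card

/-- Stick-breaking partial sums `W_{j,k}`. -/
def stickW {Ω : Type*} (Ψ : ℕ → Ω → ℝ) (j k : ℕ) (ω : Ω) : ℝ :=
  ∑ i ∈ Finset.Icc 1 j, Ψ i ω * ∏ l ∈ Finset.Icc (i + 1) k, (1 - Ψ l ω)

/-- `ζ_j = Ψ_j ∏_{i=j+1}^r (1 - Ψ_i)`. -/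
def zetaStick {Ω : Type*} (Ψ : ℕ → Ω → ℝ) (r j : ℕ) (ω : Ω) : ℝ :=
  Ψ j ω * ∏ i ∈ Finset.Icc (j + 1) r, (1 - Ψ i ω)

/-- `k(n)`: number of arrival times `≤ n`. -/
def kArr (t : ℕ → ℕ) (n : ℕ) : ℕ := ((Finset.Icc 1 n).filter (fun k => t k ≤ n)).card

/-- Cylinder event for the arrival times. -/
def Tcyl {Ω : Type*} (T : ℕ → Ω → ℕ) (m : ℕ) (tt : ℕ → ℕ) : Set Ω :=
  {ω | ∀ k, 1 ≤ k → k ≤ m → T k ω = tt k}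

/-- A random arrival-time sequence. -/
def IsRandomArrival {Ω : Type*} [MeasureSpace Ω] (T : ℕ → Ω → ℕ) : Prop :=
  (∀ k, Measurable (T k)) ∧ (∀ᵐ ω, T 1 ω = 1 ∧ ∀ k, 1 ≤ k → T k ω < T (k + 1) ω)

/-- An `(α,T)`-process with randomized arrival times `T`: conditionally on `T`, it is an
`(α,t)`-process.  The conditioning is expressed via finite-dimensional cylinder events of `T`
which determine that `n+1` is not an arrival time. -/
def IsAlphaRandomTProcess {Ω : Type*} [MeasureSpace Ω] (α : ℝ) (T : ℕ → Ω → ℕ)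
    (L : ℕ → Ω → ℕ) : Prop :=
  (∀ n, Measurable (L n)) ∧ IsRandomArrival T ∧
  (∀ k, 1 ≤ k → ∀ᵐ ω, L (T k ω) ω = k) ∧
  (∀ n, 1 ≤ n → ∀ m, ∀ tt : ℕ → ℕ, (∀ k, 1 ≤ k → k ≤ m → tt k ≠ n + 1) → n + 1 ≤ tt m →
    ∀ j, 1 ≤ j → ∀ l : ℕ → ℕ, j ≤ kmaxf l n →
      ℙ (Tcyl T m tt ∩ cylEvent L n l ∩ {ω | L (n + 1) ω = j})
        = ENNReal.ofReal (((ncount l n j : ℝ) - α) / ((n : ℝ) - α * (kmaxf l n : ℝ))) *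
            ℙ (Tcyl T m tt ∩ cylEvent L n l))

/-- Partial sums `p̄_j = ∑_{i=1}^j p_i`. -/
def pbar (p : ℕ → ℝ) (j : ℕ) : ℝ := ∑ i ∈ Finset.Icc 1 j, p i

open Finset Asymptotics

section Products

variable {x : ℕ → ℝ}

lemma antitone_prod_range_one_sub (hx : ∀ i, x i ∈ Set.Icc 0 1) :
    Antitone fun n => ∏ i ∈ range n, (1 - x i) :=
  antitone_nat_of_succ_le fun n => by
    rw [prod_range_succ]
    exact mul_le_of_le_one_right (prod_nonneg fun i _ => sub_nonneg.2 (hx i).2)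
      (sub_le_self _ (hx n).1)

lemma tendsto_prod_range_one_sub_iInf (hx : ∀ i, x i ∈ Set.Icc 0 1) :
    Tendsto (fun n => ∏ i ∈ range n, (1 - x i)) atTop
      (𝓝 (⨅ n, ∏ i ∈ range n, (1 - x i))) :=
  tendsto_atTop_ciInf (antitone_prod_range_one_sub hx)
    ⟨0, by rintro _ ⟨n, rfl⟩; exact prod_nonneg fun i _ => sub_nonneg.2 (hx i).2⟩

lemma tendsto_prod_range_one_sub_zero (hx : ∀ i, x i ∈ Set.Icc 0 1) (hs : ¬ Summable x) :
    Tendsto (fun n => ∏ i ∈ range n, (1 - x i)) atTop (𝓝 0) := by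
  have hsum : Tendsto (fun n => ∑ i ∈ range n, x i) atTop atTop :=
    (not_summable_iff_tendsto_nat_atTop_of_nonneg fun i => (hx i).1).1 hs
  refine tendsto_of_tendsto_of_tendsto_of_le_of_le tendsto_const_nhds
    (Real.tendsto_exp_atBot.comp (tendsto_neg_atTop_atBot.comp hsum))
    (fun n => prod_nonneg fun i _ => sub_nonneg.2 (hx i).2) fun n => ?_
  calc ∏ i ∈ range n, (1 - x i) ≤ ∏ i ∈ range n, Real.exp (-x i) :=
        prod_le_prod (fun i _ => sub_nonneg.2 (hx i).2) fun i _ => by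
          linarith [Real.add_one_le_exp (-x i)]
    _ = Real.exp (-∑ i ∈ range n, x i) := by rw [← Real.exp_sum, sum_neg_distrib]

lemma multipliable_one_sub_of_summable (hs : Summable x) : Multipliable fun i => 1 - x i := by
  simpa only [sub_eq_add_neg] using Real.multipliable_one_add_of_summable hs.neg

lemma tprod_one_sub_pos (hx : ∀ i, x i < 1) (hs : Summable x) : 0 < ∏' i, (1 - x i) := by
  rw [← Real.rexp_tsum_eq_tprod (fun i => sub_pos.2 (hx i))
    (by simpa only [sub_eq_add_neg] using Real.summable_log_one_add_of_summable hs.neg)]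
  exact Real.exp_pos _

lemma prod_Icc_eq_prod_range {M : Type*} [CommMonoid M] (f : ℕ → M) (j k : ℕ) :
    ∏ i ∈ Icc (j + 1) k, f i = ∏ n ∈ range (k - j), f (n + (j + 1)) := by
  rw [← Ico_add_one_right_eq_Icc, prod_Ico_eq_prod_range, Nat.add_sub_add_right]
  simp only [add_comm]

lemma tendsto_prod_Icc_of_tendsto_prod_range {M : Type*} [CommMonoid M] {f : ℕ → M} {j : ℕ}
    {l : Filter M} (h : Tendsto (fun n => ∏ i ∈ range n, f (i + (j + 1))) atTop l) :
    Tendsto (fun k => ∏ i ∈ Icc (j + 1) k, f i) atTop l := by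
  simpa only [prod_Icc_eq_prod_range, Function.comp_def] using h.comp (tendsto_sub_atTop_nat j)

end Products

section Beta

variable {a b : ℝ}

lemma betaMeasureAux_eq_betaMeasure (a b : ℝ) : betaMeasureAux a b = betaMeasure a b := by
  rw [betaMeasureAux, betaMeasure, ← withDensity_indicator measurableSet_Ioo]
  congr 1
  funext x
  by_cases hx : x ∈ Set.Ioo (0 : ℝ) 1
  · simp [Set.indicator_of_mem hx, betaPDF_of_pos_lt_one hx.1 hx.2, beta]
  · rw [Set.indicator_of_notMem hx, betaPDF, betaPDFReal, if_neg (show ¬(0 < x ∧ x < 1) from hx),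
      ENNReal.ofReal_zero]

lemma ae_mem_Ioo_betaMeasure (a b : ℝ) : ∀ᵐ x ∂betaMeasure a b, x ∈ Set.Ioo 0 1 :=
  (ae_withDensity_iff (measurable_betaPDFReal a b).ennreal_ofReal).2 <| ae_of_all _ fun _ hx =>
    ⟨not_le.1 (mt betaPDF_eq_zero_of_nonpos hx), not_le.1 (mt betaPDF_eq_zero_of_one_le hx)⟩

lemma beta_add_one_left (ha : 0 < a) (hb : 0 < b) : beta (a + 1) b = a / (a + b) * beta a b := by
  have hab : a + b ≠ 0 := (add_pos ha hb).ne'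
  rw [beta, beta, Real.Gamma_add_one ha.ne', add_right_comm, Real.Gamma_add_one hab]
  field_simp [(Real.Gamma_pos_of_pos (add_pos ha hb)).ne']

lemma mul_betaPDFReal (ha : 0 < a) (hb : 0 < b) (x : ℝ) :
    x * betaPDFReal a b x = a / (a + b) * betaPDFReal (a + 1) b x := by
  by_cases hx : 0 < x ∧ x < 1
  · rw [betaPDFReal, betaPDFReal, if_pos hx, if_pos hx, beta_add_one_left ha hb,
      add_sub_cancel_right, ← sub_add_cancel a 1, Real.rpow_add_one hx.1.ne', sub_add_cancel]
    field_simp [(add_pos ha hb).ne']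
  · simp only [betaPDFReal, if_neg hx, mul_zero]

lemma integral_id_betaMeasure (ha : 0 < a) (hb : 0 < b) :
    ∫ x, x ∂betaMeasure a b = a / (a + b) := by
  have hpdf : ∀ x, 0 ≤ betaPDFReal a b x := fun x => by
    by_cases hx : 0 < x ∧ x < 1
    · exact (betaPDFReal_pos hx.1 hx.2 ha hb).le
    · simp only [betaPDFReal, if_neg hx, le_refl]
  have hlin : ∫⁻ x, ENNReal.ofReal x ∂betaMeasure a b = ENNReal.ofReal (a / (a + b)) := by
    have hm : ∀ a, Measurable (betaPDF a b) := fun a => (measurable_betaPDFReal a b).ennreal_ofReal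
    rw [betaMeasure, lintegral_withDensity_eq_lintegral_mul _ (hm a)
      (g := fun x => ENNReal.ofReal x) measurable_id.ennreal_ofReal]
    calc ∫⁻ x, betaPDF a b x * ENNReal.ofReal x
        = ∫⁻ x, ENNReal.ofReal (a / (a + b)) * betaPDF (a + 1) b x := by
          congr 1
          funext x
          rw [betaPDF, betaPDF, mul_comm, ← ENNReal.ofReal_mul' (hpdf x), mul_betaPDFReal ha hb,
            ENNReal.ofReal_mul (div_pos ha (add_pos ha hb)).le]
      _ = ENNReal.ofReal (a / (a + b)) := by
          rw [lintegral_const_mul _ (hm (a + 1)),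
            lintegral_betaPDF_eq_one (by linarith) hb, mul_one]
  rw [integral_eq_lintegral_of_nonneg_ae
    ((ae_mem_Ioo_betaMeasure a b).mono fun x hx => hx.1.le) aestronglyMeasurable_id, hlin,
    ENNReal.toReal_ofReal (div_pos ha (add_pos ha hb)).le]

end Beta

section Probability

variable {Ω ι : Type*} {mΩ : MeasurableSpace Ω} {μ : Measure Ω}

lemma ae_summable_of_summable_integral [Countable ι] {X : ι → Ω → ℝ}
    (hint : ∀ i, Integrable (X i) μ) (hnn : ∀ i, 0 ≤ᵐ[μ] X i)
    (hs : Summable fun i => μ[X i]) : ∀ᵐ ω ∂μ, Summable fun i => X i ω := by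
  have hfin : ∫⁻ ω, ∑' i, ENNReal.ofReal (X i ω) ∂μ ≠ ⊤ := by
    rw [lintegral_tsum fun i => (hint i).aemeasurable.ennreal_ofReal]
    simp_rw [← ofReal_integral_eq_lintegral_ofReal (hint _) (hnn _)]
    rw [← ENNReal.ofReal_tsum_of_nonneg (fun i => integral_nonneg_of_ae (hnn i)) hs]
    exact ENNReal.ofReal_ne_top
  filter_upwards [ae_lt_top' (AEMeasurable.tsum fun i =>
    (hint i).aemeasurable.ennreal_ofReal) hfin, ae_all_iff.2 hnn] with ω hω hnn
  exact (ENNReal.summable_toReal hω.ne).congr fun i => ENNReal.toReal_ofReal (hnn i)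

variable {a b : ℝ} {Y : Ω → ℝ}

lemma ae_mem_Ioo_of_map_eq_betaMeasure (hY : AEMeasurable Y μ) (h : μ.map Y = betaMeasure a b) :
    ∀ᵐ ω ∂μ, Y ω ∈ Set.Ioo 0 1 :=
  ae_of_ae_map hY (h ▸ ae_mem_Ioo_betaMeasure a b)

lemma integral_eq_of_map_eq_betaMeasure (hY : AEMeasurable Y μ) (h : μ.map Y = betaMeasure a b)
    (ha : 0 < a) (hb : 0 < b) : μ[Y] = a / (a + b) := by
  rw [← integral_id_betaMeasure ha hb, ← h]
  exact (integral_map hY aestronglyMeasurable_id).symm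

variable [IsProbabilityMeasure μ]

lemma integral_mem_Icc_of_ae_mem_Icc {X : Ω → ℝ} (hXm : AEMeasurable X μ)
    (h01 : ∀ᵐ ω ∂μ, X ω ∈ Set.Icc 0 1) : μ[X] ∈ Set.Icc 0 1 :=
  ⟨integral_nonneg_of_ae (h01.mono fun _ h => h.1), by
    simpa using integral_mono_ae (Integrable.of_mem_Icc 0 1 hXm h01) (integrable_const (1 : ℝ))
      (h01.mono fun _ h => h.2)⟩

lemma lintegral_ofReal_prod_one_sub {X : ι → Ω → ℝ} (hXm : ∀ i, Measurable (X i))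
    (hind : iIndepFun X μ) (h01 : ∀ i, ∀ᵐ ω ∂μ, X i ω ∈ Set.Icc 0 1) (s : Finset ι) :
    ∫⁻ ω, ENNReal.ofReal (∏ i ∈ s, (1 - X i ω)) ∂μ = ENNReal.ofReal (∏ i ∈ s, (1 - μ[X i])) := by
  have hfactor : ∀ i, ∫⁻ ω, ENNReal.ofReal (1 - X i ω) ∂μ = ENNReal.ofReal (1 - μ[X i]) := by
    intro i
    have hint := Integrable.of_mem_Icc 0 1 (hXm i).aemeasurable (h01 i)
    rw [← ofReal_integral_eq_lintegral_ofReal (f := fun ω => 1 - X i ω)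
        ((integrable_const 1).sub hint) ((h01 i).mono fun _ h => sub_nonneg.2 h.2),
      integral_sub (integrable_const 1) hint, integral_const, probReal_univ, one_smul]
  calc ∫⁻ ω, ENNReal.ofReal (∏ i ∈ s, (1 - X i ω)) ∂μ
      = ∫⁻ ω, ∏ i ∈ s, ENNReal.ofReal (1 - X i ω) ∂μ := by
        refine lintegral_congr_ae ?_
        filter_upwards [(eventually_all_finset s).2 fun i _ => h01 i] with ω hω
        exact ENNReal.ofReal_prod_of_nonneg fun i hi => sub_nonneg.2 (hω i hi).2
    _ = ∏ i ∈ s, ENNReal.ofReal (1 - μ[X i]) := by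
        rw [lintegral_prod_eq_prod_lintegral_of_indepFun s (fun i ω => ENNReal.ofReal (1 - X i ω))
          (hind.comp _ fun _ => (measurable_const.sub measurable_id).ennreal_ofReal)
          fun i => ((hXm i).const_sub 1).ennreal_ofReal]
        exact prod_congr rfl fun i _ => hfactor i
    _ = ENNReal.ofReal (∏ i ∈ s, (1 - μ[X i])) :=
        (ENNReal.ofReal_prod_of_nonneg fun i _ =>
          sub_nonneg.2 (integral_mem_Icc_of_ae_mem_Icc (hXm i).aemeasurable (h01 i)).2).symm

theorem ae_tendsto_prod_one_sub_zero {X : ℕ → Ω → ℝ} (hXm : ∀ n, Measurable (X n))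
    (hind : iIndepFun X μ) (h01 : ∀ n, ∀ᵐ ω ∂μ, X n ω ∈ Set.Icc 0 1)
    (hdiv : ¬ Summable fun n => μ[X n]) :
    ∀ᵐ ω ∂μ, Tendsto (fun n => ∏ i ∈ range n, (1 - X i ω)) atTop (𝓝 0) := by
  set L : Ω → ℝ := fun ω => ⨅ n, ∏ i ∈ range n, (1 - X i ω)
  have hgood : ∀ᵐ ω ∂μ, ∀ n, X n ω ∈ Set.Icc 0 1 := ae_all_iff.2 h01
  have hmeans : Tendsto (fun n => ∏ i ∈ range n, (1 - μ[X i])) atTop (𝓝 0) :=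
    tendsto_prod_range_one_sub_zero
      (fun n => integral_mem_Icc_of_ae_mem_Icc (hXm n).aemeasurable (h01 n)) hdiv
  have hL : ∫⁻ ω, ENNReal.ofReal (L ω) ∂μ = 0 := by
    refine le_antisymm (ge_of_tendsto' (by simpa using ENNReal.tendsto_ofReal hmeans) fun n => ?_)
      zero_le
    rw [← lintegral_ofReal_prod_one_sub hXm hind h01]
    refine lintegral_mono_ae (hgood.mono fun ω hω => ENNReal.ofReal_le_ofReal ?_)
    exact (antitone_prod_range_one_sub hω).le_of_tendsto (tendsto_prod_range_one_sub_iInf hω) n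
  have hL0 : ∀ᵐ ω ∂μ, ENNReal.ofReal (L ω) = 0 :=
    (lintegral_eq_zero_iff (Measurable.iInf fun n =>
      Finset.measurable_prod _ fun i _ => (hXm i).const_sub 1).ennreal_ofReal).1 hL
  filter_upwards [hgood, hL0] with ω hω h0
  have hLω : L ω = 0 := le_antisymm (ENNReal.ofReal_eq_zero.1 h0)
    (le_ciInf fun n => prod_nonneg fun i _ => sub_nonneg.2 (hω i).2)
  simpa only [L, hLω] using tendsto_prod_range_one_sub_iInf hω

end Probability

section Arrival

variable {t : ℕ → ℕ} {α σ μσ : ℝ}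

lemma IsArrivalSeq.le_apply (ht : IsArrivalSeq t) {k : ℕ} (hk : 1 ≤ k) : k ≤ t k := by
  induction k, hk using Nat.le_induction with
  | base => exact ht.1.ge
  | succ n hn ih => exact ih.trans_lt (ht.2 n hn)

lemma IsArrivalSeq.beta_param_pos (ht : IsArrivalSeq t) (hα : α < 1) {i : ℕ} (hi : 2 ≤ i) :
    0 < (t i : ℝ) - 1 - ((i : ℝ) - 1) * α := by
  have hti : (i : ℝ) ≤ t i := by exact_mod_cast ht.le_apply (by omega)
  have hi' : (2 : ℝ) ≤ i := by exact_mod_cast hi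
  nlinarith

lemma sub_mul_mem_Icc {T x : ℝ} (hx : 0 ≤ x) (hxT : x ≤ T) :
    T - x * α ∈ Set.Icc (min 1 (1 - α) * T) ((1 + |α|) * T) := by
  constructor
  · rcases le_total 0 α with h | h
    · nlinarith [min_le_right 1 (1 - α)]
    · nlinarith [min_le_left 1 (1 - α)]
  · nlinarith [neg_abs_le α, abs_nonneg α]

lemma IsArrivalSeq.isTheta_sub_mul (ht : IsArrivalSeq t) (hα : α < 1) :
    (fun i : ℕ => (t i : ℝ) - i * α) =Θ[atTop] fun i => (t i : ℝ) := by
  have hc : 0 < min 1 (1 - α) := lt_min one_pos (sub_pos.2 hα)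
  have hbounds : ∀ᶠ i : ℕ in atTop, 0 ≤ (t i : ℝ) ∧
      (t i : ℝ) - i * α ∈ Set.Icc (min 1 (1 - α) * t i) ((1 + |α|) * t i) := by
    filter_upwards [eventually_ge_atTop 1] with i hi
    exact ⟨Nat.cast_nonneg _, sub_mul_mem_Icc (Nat.cast_nonneg i)
      (by exact_mod_cast ht.le_apply hi)⟩
  refine ⟨IsBigO.of_bound (1 + |α|) ?_, IsBigO.of_bound (min 1 (1 - α))⁻¹ ?_⟩ <;>
    filter_upwards [hbounds] with i ⟨hT, hlo, hhi⟩ <;>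
    rw [Real.norm_of_nonneg hT, Real.norm_of_nonneg ((mul_nonneg hc.le hT).trans hlo)]
  · exact hhi
  · rwa [inv_mul_eq_div, le_div_iff₀' hc]

lemma isTheta_inv_of_tendsto_mul {β 𝕜 : Type*} [NormedField 𝕜] {l : Filter β} {f g : β → 𝕜}
    {c : 𝕜} (h : Tendsto (fun x => f x * g x) l (𝓝 c)) (hc : c ≠ 0) :
    (fun x => (f x)⁻¹) =Θ[l] g :=
  (isTheta_of_div_tendsto_nhds_ne_zero
    ((h.inv₀ hc).congr fun x => by rw [inv_div_left, mul_comm]) (inv_ne_zero hc)).symm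

lemma summable_inv_iff_of_tendsto_mul_rpow {u : ℕ → ℝ} (hσ : 0 < σ) (hμ : μσ ≠ 0)
    (h : Tendsto (fun k => u k * (k : ℝ) ^ (-(1 / σ))) atTop (𝓝 μσ)) :
    Summable (fun k => (u k)⁻¹) ↔ σ < 1 := by
  rw [(isTheta_inv_of_tendsto_mul h hμ).summable_iff_nat, Real.summable_nat_rpow, neg_lt_neg_iff,
    one_lt_div hσ]

lemma IsArrivalSeq.summable_mean_iff (ht : IsArrivalSeq t) (hα : α < 1) (hσ : 0 < σ)
    (hμ : μσ ≠ 0) (hrate : Tendsto (fun k => (t k : ℝ) * (k : ℝ) ^ (-(1 / σ))) atTop (𝓝 μσ)) :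
    Summable (fun i : ℕ => (1 - α) / ((t i : ℝ) - i * α)) ↔ σ < 1 := by
  simp only [div_eq_mul_inv]
  rw [((isTheta_const_mul_left (sub_ne_zero.2 hα.ne')).2
    (ht.isTheta_sub_mul hα).inv).summable_iff_nat]
  exact summable_inv_iff_of_tendsto_mul_rpow hσ hμ hrate

end Arrival

theorem stmt_4_general {Ω : Type*} [MeasureSpace Ω] [IsProbabilityMeasure (ℙ : Measure Ω)]
    (α σ μσ : ℝ) (hα : α < 1) (hσ0 : 0 < σ) (hμ : 0 < μσ)
    (t : ℕ → ℕ) (ht : IsArrivalSeq t)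
    (hrate : Tendsto (fun k => (t k : ℝ) * (k : ℝ) ^ (-(1 / σ))) atTop (𝓝 μσ))
    (Ψ : ℕ → Ω → ℝ) (hΨm : ∀ j, Measurable (Ψ j))
    (hindep : iIndepFun Ψ ℙ)
    (hΨlaw : ∀ j, 2 ≤ j →
      Measure.map (Ψ j) ℙ = betaMeasureAux (1 - α) ((t j : ℝ) - 1 - ((j : ℝ) - 1) * α)) :
    ∀ j, 1 ≤ j → ∃ Winf : Ω → ℝ,
      (∀ᵐ ω, Tendsto (fun k => ∏ i ∈ Finset.Icc (j + 1) k, (1 - Ψ i ω)) atTop (𝓝 (Winf ω))) ∧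
      (σ = 1 → ∀ᵐ ω, Winf ω = 0) ∧
      (σ < 1 → ∀ᵐ ω, 0 < Winf ω) := by
  intro j hj
  set X : ℕ → Ω → ℝ := fun n => Ψ (n + (j + 1))
  have hlaw (n : ℕ) : Measure.map (X n) ℙ = betaMeasure (1 - α)
      ((t (n + (j + 1)) : ℝ) - 1 - (((n + (j + 1) : ℕ) : ℝ) - 1) * α) :=
    (hΨlaw _ (by omega)).trans (betaMeasureAux_eq_betaMeasure _ _)
  have hX01 : ∀ᵐ ω, ∀ n, X n ω ∈ Set.Ioo 0 1 :=
    ae_all_iff.2 fun n => ae_mem_Ioo_of_map_eq_betaMeasure (hΨm _).aemeasurable (hlaw n)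
  have hXI (n : ℕ) : ∀ᵐ ω, X n ω ∈ Set.Icc 0 1 :=
    hX01.mono fun _ h => Set.Ioo_subset_Icc_self (h n)
  have hsum : Summable (fun n => ℙ[X n]) ↔ σ < 1 := by
    have hmean (n : ℕ) :
        ℙ[X n] = (1 - α) / ((t (n + (j + 1)) : ℝ) - ((n + (j + 1) : ℕ) : ℝ) * α) := by
      rw [integral_eq_of_map_eq_betaMeasure (hΨm _).aemeasurable (hlaw n) (sub_pos.2 hα)
        (ht.beta_param_pos hα (by omega))]
      ring_nf
    simp only [hmean]
    exact (summable_nat_add_iff (f := fun i => (1 - α) / ((t i : ℝ) - i * α)) (j + 1)).trans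
      (ht.summable_mean_iff hα hσ0 hμ.ne' hrate)
  have hind : iIndepFun X ℙ := hindep.precomp (add_left_injective (j + 1))
  refine ⟨fun ω => ⨅ n, ∏ i ∈ range n, (1 - X i ω), ?_, fun hσ => ?_, fun hσ => ?_⟩
  · filter_upwards [ae_all_iff.2 hXI] with ω hω
    exact tendsto_prod_Icc_of_tendsto_prod_range (tendsto_prod_range_one_sub_iInf hω)
  · filter_upwards [ae_all_iff.2 hXI, ae_tendsto_prod_one_sub_zero (fun n => hΨm _) hind hXI
      (hsum.not.2 (not_lt.2 hσ.ge))] with ω hω h0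
    exact tendsto_nhds_unique (tendsto_prod_range_one_sub_iInf hω) h0
  · filter_upwards [hX01, ae_summable_of_summable_integral
      (fun n => Integrable.of_mem_Icc 0 1 (hΨm _).aemeasurable (hXI n))
      (fun n => (hXI n).mono fun _ h => h.1) (hsum.2 hσ)] with ω hω hs
    rw [tendsto_nhds_unique
      (tendsto_prod_range_one_sub_iInf fun n => Set.Ioo_subset_Icc_self (hω n))
      (multipliable_one_sub_of_summable hs).tendsto_prod_tprod_nat]
    exact tprod_one_sub_pos (fun n => (hω n).2) hs

/-- Proposition 5: convergence of the tail products `W_{j,k}`.  Under the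
arrival-rate assumption `t_k k^{-1/σ} → μ_σ ∈ (0,∞)` with `σ ∈ (0,1]`, for every `j ≥ 1` the
products `W_{j,k} = ∏_{i=j+1}^k (1 - Ψ_i)` converge almost surely as `k → ∞` to a limit which
is `0` a.s. in the linear regime `σ = 1` and positive a.s. in the sub-linear regime `σ < 1`. -/
theorem stmt_4 {Ω : Type*} [MeasureSpace Ω] [IsProbabilityMeasure (ℙ : Measure Ω)]
    (α σ μσ : ℝ) (hα : α < 1) (hσ0 : 0 < σ) (hσ1 : σ ≤ 1) (hμ : 0 < μσ)
    (t : ℕ → ℕ) (ht : IsArrivalSeq t)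
    (hrate : Tendsto (fun k => (t k : ℝ) * (k : ℝ) ^ (-(1 / σ))) atTop (𝓝 μσ))
    (Ψ : ℕ → Ω → ℝ) (hΨm : ∀ j, Measurable (Ψ j)) (hΨ1 : Ψ 1 = fun _ => 1)
    (hindep : iIndepFun Ψ ℙ)
    (hΨlaw : ∀ j, 2 ≤ j →
      Measure.map (Ψ j) ℙ = betaMeasureAux (1 - α) ((t j : ℝ) - 1 - ((j : ℝ) - 1) * α)) :
    ∀ j, 1 ≤ j → ∃ Winf : Ω → ℝ,
      (∀ᵐ ω, Tendsto (fun k => ∏ i ∈ Finset.Icc (j + 1) k, (1 - Ψ i ω)) atTop (𝓝 (Winf ω))) ∧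
      (σ = 1 → ∀ᵐ ω, Winf ω = 0) ∧
      (σ < 1 → ∀ᵐ ω, 0 < Winf ω) :=
  stmt_4_general α σ μσ hα hσ0 hμ t ht hrate Ψ hΨm hindep hΨlaw
end
end

section
/- Fix α ∈ (−∞,1), an arrival-time sequence t, and r ≥ 1. Let Ψ_1 = 1 and Ψ_j ∼ Beta(1−α, t_j − 1 − (j−1)α) for 2 ≤ j ≤ r be mutually independent, and define ζ_j := Ψ_j · ∏_{i=j+1}^{r} (1 − Ψ_i) for 1 ≤ j ≤ r (the distributional representation of the limiting degree sequence of an (α,t)-graph). Then for every 1 ≤ j ≤ r one has ζ_j / (ζ_1 + ⋯ + ζ_j) = Ψ_j almost surely; in particular the relative increments ζ_j / ∑_{i=1}^{j} ζ_i, j = 1,…,r, are mutually independent random variables, i.e. the limiting degree sequence of an (α,t)-graph is neutral-to-the-left. -/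
open MeasureTheory ProbabilityTheory Filter
open scoped ENNReal Topology Classical

noncomputable section

/-- The beta distribution on `(0,1)` with parameters `a, b`. -/
def betaMeasure (a b : ℝ) : Measure ℝ :=
  (volume.restrict (Set.Ioo (0 : ℝ) 1)).withDensity fun x =>
    ENNReal.ofReal (Real.Gamma (a + b) / (Real.Gamma a * Real.Gamma b) * x ^ (a - 1) * (1 - x) ^ (b - 1))

/-!
The partial sums of the stick-breaking weights telescope:
`ζ_1 + ⋯ + ζ_j = ∏_{i=j+1}^r (1 - Ψ_i)` because `Ψ_1 = 1`. A beta law has no atom at `1`, so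
this product is almost surely nonzero and `ζ_j / (ζ_1 + ⋯ + ζ_j) = Ψ_j` almost surely. The
relative increments are therefore a.e. equal to the independent `Ψ_1, …, Ψ_r`.
-/

instance betaMeasure.instNullSingletonClass (a b : ℝ) :
    NullSingletonClass (_root_.betaMeasure a b) := by
  unfold _root_.betaMeasure
  infer_instance

theorem sum_mul_prod_one_sub_add_prod_one_sub (x : ℕ → ℝ) {j r : ℕ} (hjr : j ≤ r) :
    ∑ i ∈ Finset.Icc 1 j, x i * ∏ l ∈ Finset.Icc (i + 1) r, (1 - x l)
        + ∏ l ∈ Finset.Icc 1 r, (1 - x l)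
      = ∏ l ∈ Finset.Icc (j + 1) r, (1 - x l) := by
  induction j with
  | zero => simp
  | succ n ih =>
    rw [Finset.sum_Icc_succ_top (by omega), add_right_comm, ih (by omega),
      ← Finset.insert_Icc_add_one_left_eq_Icc hjr, Finset.prod_insert (by simp)]
    ring

theorem sum_mul_prod_one_sub_eq_prod_one_sub (x : ℕ → ℝ) (hx : x 1 = 1) {j r : ℕ}
    (hj : 1 ≤ j) (hjr : j ≤ r) :
    ∑ i ∈ Finset.Icc 1 j, x i * ∏ l ∈ Finset.Icc (i + 1) r, (1 - x l)
      = ∏ l ∈ Finset.Icc (j + 1) r, (1 - x l) := by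
  have hzero : ∏ l ∈ Finset.Icc 1 r, (1 - x l) = 0 :=
    Finset.prod_eq_zero (Finset.mem_Icc.2 ⟨le_rfl, hj.trans hjr⟩) (by rw [hx, sub_self])
  simpa [hzero] using sum_mul_prod_one_sub_add_prod_one_sub x hjr

theorem zetaStick_div_sum_eq {Ω : Type*} (Ψ : ℕ → Ω → ℝ) (ω : Ω) (hΨ1 : Ψ 1 ω = 1) {r j : ℕ}
    (hj : 1 ≤ j) (hjr : j ≤ r) (hne : ∀ l ∈ Finset.Icc (j + 1) r, Ψ l ω ≠ 1) :
    zetaStick Ψ r j ω / (∑ i ∈ Finset.Icc 1 j, zetaStick Ψ r i ω) = Ψ j ω := by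
  have hprod : ∏ l ∈ Finset.Icc (j + 1) r, (1 - Ψ l ω) ≠ 0 :=
    Finset.prod_ne_zero_iff.2 fun l hl => sub_ne_zero.2 (hne l hl).symm
  have hsum :
      ∑ i ∈ Finset.Icc 1 j, zetaStick Ψ r i ω = ∏ l ∈ Finset.Icc (j + 1) r, (1 - Ψ l ω) :=
    sum_mul_prod_one_sub_eq_prod_one_sub (Ψ · ω) hΨ1 hj hjr
  rw [hsum, zetaStick, mul_div_assoc, div_self hprod, mul_one]

theorem ae_ne_of_nullSingletonClass_map {Ω β : Type*} [MeasurableSpace Ω] [MeasurableSpace β]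
    [MeasurableSingletonClass β] {μ : Measure Ω} {X : Ω → β} (hX : Measurable X)
    [NullSingletonClass (μ.map X)] (c : β) : ∀ᵐ ω ∂μ, X ω ≠ c := by
  have h := measure_singleton (μ := μ.map X) c
  rw [Measure.map_apply hX (measurableSet_singleton c)] at h
  exact measure_mono_null (fun ω hω => not_not.1 hω) h

theorem stmt_9_general {Ω : Type*} [MeasureSpace Ω]
    (α : ℝ) (t : ℕ → ℕ) (r : ℕ)
    (Ψ : ℕ → Ω → ℝ) (hΨm : ∀ j, Measurable (Ψ j)) (hΨ1 : Ψ 1 = fun _ => 1)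
    (hindep : iIndepFun Ψ ℙ)
    (hΨlaw : ∀ j, 2 ≤ j → j ≤ r →
      Measure.map (Ψ j) ℙ = _root_.betaMeasure (1 - α) ((t j : ℝ) - 1 - ((j : ℝ) - 1) * α)) :
    (∀ j, 1 ≤ j → j ≤ r →
      ∀ᵐ ω, zetaStick Ψ r j ω / (∑ i ∈ Finset.Icc 1 j, zetaStick Ψ r i ω) = Ψ j ω) ∧
    iIndepFun
      (fun (j : Fin r) ω =>
        zetaStick Ψ r ((j : ℕ) + 1) ω /
          (∑ i ∈ Finset.Icc 1 ((j : ℕ) + 1), zetaStick Ψ r i ω)) ℙ := by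
  have hae : ∀ j, 1 ≤ j → j ≤ r →
      ∀ᵐ ω, zetaStick Ψ r j ω / (∑ i ∈ Finset.Icc 1 j, zetaStick Ψ r i ω) = Ψ j ω := by
    intro j hj hjr
    have hne : ∀ᵐ ω, ∀ l ∈ Finset.Icc (j + 1) r, Ψ l ω ≠ 1 := by
      refine (ae_ball_iff (Finset.Icc (j + 1) r).countable_toSet).2 fun l hl => ?_
      obtain ⟨hl1, hlr⟩ := Finset.mem_Icc.1 hl
      have : NullSingletonClass ((ℙ : Measure Ω).map (Ψ l)) := by
        rw [hΨlaw l (by omega) hlr]; infer_instance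
      exact ae_ne_of_nullSingletonClass_map (hΨm l) 1
    filter_upwards [hne] with ω hω
    exact zetaStick_div_sum_eq Ψ ω (congrFun hΨ1 ω) hj hjr hω
  refine ⟨hae, (iIndepFun_congr fun j => hae _ (by omega) j.isLt).2 ?_⟩
  exact hindep.precomp fun a b h => Fin.ext (Nat.add_right_cancel h)

/-- neutrality-to-the-left of the limiting degree sequence.  For the
stick-breaking representation `ζ_j = Ψ_j ∏_{i=j+1}^r (1-Ψ_i)` of the limiting degrees of an
`(α,t)`-graph, the relative increments `ζ_j / ∑_{i≤j} ζ_i` equal `Ψ_j` a.s. and are mutually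
independent, i.e. the limiting degree sequence is neutral-to-the-left. -/
theorem stmt_9 {Ω : Type*} [MeasureSpace Ω] [IsProbabilityMeasure (ℙ : Measure Ω)]
    (α : ℝ) (hα : α < 1) (t : ℕ → ℕ) (ht : IsArrivalSeq t) (r : ℕ) (hr : 1 ≤ r)
    (Ψ : ℕ → Ω → ℝ) (hΨm : ∀ j, Measurable (Ψ j)) (hΨ1 : Ψ 1 = fun _ => 1)
    (hindep : iIndepFun Ψ ℙ)
    (hΨlaw : ∀ j, 2 ≤ j → j ≤ r →
      Measure.map (Ψ j) ℙ = _root_.betaMeasure (1 - α) ((t j : ℝ) - 1 - ((j : ℝ) - 1) * α)) :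
    (∀ j, 1 ≤ j → j ≤ r →
      ∀ᵐ ω, zetaStick Ψ r j ω / (∑ i ∈ Finset.Icc 1 j, zetaStick Ψ r i ω) = Ψ j ω) ∧
    iIndepFun
      (fun (j : Fin r) ω =>
        zetaStick Ψ r ((j : ℕ) + 1) ω /
          (∑ i ∈ Finset.Icc 1 ((j : ℕ) + 1), zetaStick Ψ r i ω)) ℙ :=
  stmt_9_general α t r Ψ hΨm hΨ1 hindep hΨlaw
end
end

section
/- Let (L_n) be an (α,T)-process with α ∈ (−∞,1) and random arrival times T satisfying T_j · j^{−1/σ} → μ_σ almost surely for some σ ∈ (0,1] and μ_σ ∈ (1,∞). Let K_n := max{L_1,…,L_n} be the number of vertices after n draws, so the graph with n edges has |V(G_n)| = K_{2n} vertices. Then K_n / n^{σ} → μ_σ^{−σ} almost surely, and the graph sequence has ε-density with ε = 1/σ: almost surely, limsup_{n→∞} n / |V(G_n)|^{1/σ} = μ_σ/2 ∈ (0,∞). In particular the graph sequence is sparse (ε < 2) whenever σ > 1/2. -/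
/-!
Almost surely the labels follow the model: at an arrival time `T k` the new label `k` appears,
and at any other time the selection weights `(N_j - α) / (n - α K_n)` of the present labels are
nonnegative (as `α < 1`) and sum to one, so a present label is repeated. Hence `K_n` counts the
arrivals up to `n`, i.e. `T (K_n) ≤ n < T (K_n + 1)`. Inverting `T_j ~ μ_σ j^{1/σ}` along this
sandwich gives `n ~ μ_σ K_n^{1/σ}`, which is the growth of `K_n` and, along `2n`, a limit (hence
the limsup) of `n / K_{2n}^{1/σ}`.
-/

open MeasureTheory ProbabilityTheory Filter
open scoped ENNReal Topology Classical

noncomputable section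

lemma kmaxf_zero (l : ℕ → ℕ) : kmaxf l 0 = 0 := by simp [kmaxf]

lemma kmaxf_succ (l : ℕ → ℕ) (n : ℕ) : kmaxf l (n + 1) = max (kmaxf l n) (l (n + 1)) := by
  rw [kmaxf, kmaxf, ← Finset.insert_Icc_right_eq_Icc_add_one (by omega), Finset.sup_insert,
    max_comm]

lemma le_kmaxf (l : ℕ → ℕ) {i n : ℕ} (h1 : 1 ≤ i) (h2 : i ≤ n) : l i ≤ kmaxf l n :=
  Finset.le_sup (Finset.mem_Icc.2 ⟨h1, h2⟩)

lemma kmaxf_congr {l l' : ℕ → ℕ} (n : ℕ) (h : ∀ i, 1 ≤ i → i ≤ n → l i = l' i) :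
    kmaxf l n = kmaxf l' n :=
  Finset.sup_congr rfl fun i hi => h i (Finset.mem_Icc.1 hi).1 (Finset.mem_Icc.1 hi).2

def IsRestrictedGrowth (n : ℕ) (l : ℕ → ℕ) : Prop :=
  ∀ i, 1 ≤ i → i ≤ n → 1 ≤ l i ∧ l i ≤ kmaxf l (i - 1) + 1

namespace IsRestrictedGrowth

variable {n : ℕ} {l : ℕ → ℕ}

lemma mono (h : IsRestrictedGrowth n l) {m : ℕ} (hmn : m ≤ n) : IsRestrictedGrowth m l :=
  fun i h1 h2 => h i h1 (h2.trans hmn)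

lemma congr {l' : ℕ → ℕ} (h : IsRestrictedGrowth n l) (hl : ∀ i, 1 ≤ i → i ≤ n → l i = l' i) :
    IsRestrictedGrowth n l' := by
  intro i h1 h2
  rw [← hl i h1 h2, ← kmaxf_congr (i - 1) fun j hj1 hj2 => hl j hj1 (by omega)]
  exact h i h1 h2

lemma succ (h : IsRestrictedGrowth n l) (h1 : 1 ≤ l (n + 1)) (h2 : l (n + 1) ≤ kmaxf l n + 1) :
    IsRestrictedGrowth (n + 1) l := by
  intro i hi1 hi2
  rcases Nat.lt_or_ge i (n + 1) with hi | hi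
  · exact h i hi1 (by omega)
  · obtain rfl : i = n + 1 := by omega
    exact ⟨h1, h2⟩

lemma kmaxf_le (h : IsRestrictedGrowth n l) : kmaxf l n ≤ n := by
  induction n with
  | zero => simp [kmaxf_zero]
  | succ n ih =>
    have hlast := (h (n + 1) (by omega) le_rfl).2
    rw [Nat.add_sub_cancel] at hlast
    rw [kmaxf_succ]
    have := ih (h.mono n.le_succ)
    omega

lemma one_le_kmaxf (h : IsRestrictedGrowth n l) (hn : 1 ≤ n) : 1 ≤ kmaxf l n :=
  (h 1 le_rfl hn).1.trans (le_kmaxf l le_rfl hn)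

lemma exists_eq (h : IsRestrictedGrowth n l) {j : ℕ} (h1 : 1 ≤ j) (h2 : j ≤ kmaxf l n) :
    ∃ i, 1 ≤ i ∧ i ≤ n ∧ l i = j := by
  induction n with
  | zero => rw [kmaxf_zero] at h2; omega
  | succ n ih =>
    rw [kmaxf_succ] at h2
    by_cases hj : j ≤ kmaxf l n
    · obtain ⟨i, hi1, hi2, rfl⟩ := ih (h.mono n.le_succ) hj
      exact ⟨i, hi1, by omega, rfl⟩
    · have hlast := (h (n + 1) (by omega) le_rfl).2
      rw [Nat.add_sub_cancel] at hlast
      exact ⟨n + 1, by omega, le_rfl, by omega⟩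

lemma one_le_ncount (h : IsRestrictedGrowth n l) {j : ℕ} (h1 : 1 ≤ j) (h2 : j ≤ kmaxf l n) :
    1 ≤ ncount l n j := by
  obtain ⟨i, hi1, hi2, hij⟩ := h.exists_eq h1 h2
  exact Finset.one_le_card.2 ⟨i, Finset.mem_filter.2 ⟨Finset.mem_Icc.2 ⟨hi1, hi2⟩, hij⟩⟩

lemma sum_ncount (h : IsRestrictedGrowth n l) :
    ∑ j ∈ Finset.Icc 1 (kmaxf l n), ncount l n j = n := by
  have hmaps : ∀ i ∈ Finset.Icc 1 n, l i ∈ Finset.Icc 1 (kmaxf l n) := fun i hi =>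
    have hi' := Finset.mem_Icc.1 hi
    Finset.mem_Icc.2 ⟨(h i hi'.1 hi'.2).1, le_kmaxf l hi'.1 hi'.2⟩
  simpa [ncount] using (Finset.card_eq_sum_card_fiberwise hmaps).symm

end IsRestrictedGrowth

namespace IsArrivalSeq

variable {t : ℕ → ℕ}

lemma strictMono_comp_succ (ht : IsArrivalSeq t) : StrictMono fun k => t (k + 1) :=
  strictMono_nat_of_lt_succ fun k => ht.2 (k + 1) (by omega)

lemma lt_iff_lt (ht : IsArrivalSeq t) {a b : ℕ} (ha : 1 ≤ a) (hb : 1 ≤ b) :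
    t a < t b ↔ a < b := by
  obtain ⟨a, rfl⟩ := Nat.exists_eq_add_of_le' ha
  obtain ⟨b, rfl⟩ := Nat.exists_eq_add_of_le' hb
  simpa using ht.strictMono_comp_succ.lt_iff_lt

lemma le_apply_s10 (ht : IsArrivalSeq t) (k : ℕ) : k ≤ t k := by
  cases k with
  | zero => exact Nat.zero_le _
  | succ k => simpa [ht.1, add_comm] using ht.strictMono_comp_succ.add_le_nat k 0

theorem kmaxf_sandwich (ht : IsArrivalSeq t) {l : ℕ → ℕ} (hlt : ∀ k, 1 ≤ k → l (t k) = k)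
    (hsel : ∀ n, 1 ≤ n → IsRestrictedGrowth n l → (∀ k, 1 ≤ k → t k ≠ n + 1) →
      l (n + 1) ∈ Finset.Icc 1 (kmaxf l n))
    {n : ℕ} (hn : 1 ≤ n) :
    IsRestrictedGrowth n l ∧ 1 ≤ kmaxf l n ∧ t (kmaxf l n) ≤ n ∧ n < t (kmaxf l n + 1) := by
  induction n, hn using Nat.le_induction with
  | base =>
    have hl1 : l 1 = 1 := by simpa [ht.1] using hlt 1 le_rfl
    have hK : kmaxf l 1 = 1 := by rw [kmaxf_succ, kmaxf_zero, hl1]; rfl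
    refine ⟨fun i h1 h2 => ?_, by omega, by rw [hK, ht.1], by simpa [hK, ht.1] using ht.2 1 le_rfl⟩
    obtain rfl : i = 1 := by omega
    simp [hl1, kmaxf_zero]
  | succ n hn ih =>
    obtain ⟨hrg, hK1, hlo, hhi⟩ := ih
    set K := kmaxf l n
    by_cases harr : ∃ k, 1 ≤ k ∧ t k = n + 1
    · obtain ⟨k, hk1, hkt⟩ := harr
      have hKk : K < k := (ht.lt_iff_lt hK1 hk1).1 (by omega)
      have hkK : ¬ K + 1 < k := fun h => by have := (ht.lt_iff_lt (by omega) hk1).2 h; omega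
      obtain rfl : k = K + 1 := by omega
      have hl : l (n + 1) = K + 1 := by rw [← hkt, hlt _ hk1]
      have hK : kmaxf l (n + 1) = K + 1 := by rw [kmaxf_succ, hl]; omega
      refine ⟨hrg.succ (by omega) (by omega), by omega, by rw [hK, hkt], ?_⟩
      rw [hK, ← hkt]
      exact ht.2 _ hk1
    · push Not at harr
      have hl := Finset.mem_Icc.1 (hsel n hn hrg harr)
      have hK : kmaxf l (n + 1) = K := by rw [kmaxf_succ]; omega
      rw [hK]
      refine ⟨hrg.succ hl.1 (by omega), hK1, by omega, ?_⟩
      have := harr (K + 1) (by omega)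
      omega

end IsArrivalSeq

lemma sum_ofReal_selection_weights {α : ℝ} (hα : α < 1) {n : ℕ} (hn : 1 ≤ n) {l : ℕ → ℕ}
    (hl : IsRestrictedGrowth n l) :
    ∑ j ∈ Finset.Icc 1 (kmaxf l n),
      ENNReal.ofReal (((ncount l n j : ℝ) - α) / ((n : ℝ) - α * (kmaxf l n : ℝ))) = 1 := by
  set K := kmaxf l n
  have hK1 : (1 : ℝ) ≤ K := by exact_mod_cast hl.one_le_kmaxf hn
  have hKn : (K : ℝ) ≤ n := by exact_mod_cast hl.kmaxf_le
  have hden : 0 < (n : ℝ) - α * K := by nlinarith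
  have hnonneg : ∀ j ∈ Finset.Icc 1 K, 0 ≤ ((ncount l n j : ℝ) - α) / ((n : ℝ) - α * K) := by
    intro j hj
    have : (1 : ℝ) ≤ ncount l n j :=
      by exact_mod_cast hl.one_le_ncount (Finset.mem_Icc.1 hj).1 (Finset.mem_Icc.1 hj).2
    exact div_nonneg (by linarith) hden.le
  have hsum : ∑ j ∈ Finset.Icc 1 K, (ncount l n j : ℝ) = n := by exact_mod_cast hl.sum_ncount
  rw [← ENNReal.ofReal_sum_of_nonneg hnonneg, ← Finset.sum_div, Finset.sum_sub_distrib, hsum,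
    Finset.sum_const, Nat.card_Icc, Nat.add_sub_cancel, nsmul_eq_mul, mul_comm,
    div_self hden.ne', ENNReal.ofReal_one]

lemma extend_finVal_apply {β : Type*} {m k : ℕ} (f e : ℕ → β) (hk : k < m) :
    Function.extend Fin.val (fun i : Fin m => f i) e k = f k :=
  Fin.val_injective.extend_apply _ e (⟨k, hk⟩ : Fin m)

section Selection

variable {Ω : Type*} [MeasureSpace Ω]

lemma measurableSet_cylEvent {L : ℕ → Ω → ℕ} (hL : ∀ n, Measurable (L n)) (n : ℕ)
    (l : ℕ → ℕ) : MeasurableSet (cylEvent L n l) := by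
  simp only [cylEvent, Set.ofPred_forall]
  exact .iInter fun i => .iInter fun _ => .iInter fun _ => hL i (measurableSet_singleton _)

lemma measurableSet_Tcyl {T : ℕ → Ω → ℕ} (hT : ∀ n, Measurable (T n)) (m : ℕ)
    (tt : ℕ → ℕ) : MeasurableSet (Tcyl T m tt) :=
  measurableSet_cylEvent hT m tt

namespace IsAlphaRandomTProcess

variable [IsFiniteMeasure (ℙ : Measure Ω)] {α : ℝ} {T L : ℕ → Ω → ℕ}

lemma measure_cyl_inter_label_notMem_eq_zero (hproc : IsAlphaRandomTProcess α T L) (hα : α < 1)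
    {n m : ℕ} (hn : 1 ≤ n) {tt : ℕ → ℕ} (htt : ∀ k, 1 ≤ k → k ≤ m → tt k ≠ n + 1)
    (httm : n + 1 ≤ tt m) {l : ℕ → ℕ} (hl : IsRestrictedGrowth n l) :
    ℙ (Tcyl T m tt ∩ cylEvent L n l ∩ L (n + 1) ⁻¹' (↑(Finset.Icc 1 (kmaxf l n)))ᶜ) = 0 := by
  obtain ⟨hLm, ⟨hTm, -⟩, -, hsel⟩ := hproc
  set S := Tcyl T m tt ∩ cylEvent L n l
  set s := Finset.Icc 1 (kmaxf l n)
  have hS : MeasurableSet S :=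
    (measurableSet_Tcyl hTm m tt).inter (measurableSet_cylEvent hLm n l)
  have hfib : ∀ j ∈ s, MeasurableSet (L (n + 1) ⁻¹' {j}) := fun j _ =>
    hLm (n + 1) (measurableSet_singleton j)
  set μS := (ℙ : Measure Ω).restrict S
  have hmass : μS (L (n + 1) ⁻¹' s) = μS Set.univ := by
    rw [← sum_measure_preimage_singleton s hfib, Measure.restrict_apply_univ]
    calc ∑ j ∈ s, μS (L (n + 1) ⁻¹' {j})
        = ∑ j ∈ s, ENNReal.ofReal (((ncount l n j : ℝ) - α) /
            ((n : ℝ) - α * (kmaxf l n : ℝ))) * ℙ S := by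
          refine Finset.sum_congr rfl fun j hj => ?_
          rw [Measure.restrict_apply (hfib j hj), Set.inter_comm]
          exact hsel n hn m tt htt httm j (Finset.mem_Icc.1 hj).1 l (Finset.mem_Icc.1 hj).2
      _ = ℙ S := by rw [← Finset.sum_mul, sum_ofReal_selection_weights hα hn hl, one_mul]
  rw [← Set.inter_comm, ← Measure.restrict_apply' hS, Set.preimage_compl,
    measure_compl (hLm (n + 1) (Set.toFinite _).measurableSet) (measure_ne_top _ _), hmass,
    tsub_self]

lemma ae_label_mem_of_not_arrival (hproc : IsAlphaRandomTProcess α T L) (hα : α < 1)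
    {n : ℕ} (hn : 1 ≤ n) :
    ∀ᵐ ω, IsArrivalSeq (fun k => T k ω) → IsRestrictedGrowth n (fun i => L i ω) →
      (∀ k, 1 ≤ k → T k ω ≠ n + 1) → L (n + 1) ω ∈ Finset.Icc 1 (kRV L n ω) := by
  -- One null event for each value of `(T₁, …, T_{n+1}, L₁, …, Lₙ)`; as `T_{n+1} ≥ n + 1`,
  -- these values decide whether `n + 1` is an arrival time.
  let ext {m : ℕ} (p : Fin m → ℕ) : ℕ → ℕ := Function.extend Fin.val p 0
  let Good : (Fin (n + 2) → ℕ) × (Fin (n + 1) → ℕ) → Prop := fun q =>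
    (∀ k, 1 ≤ k → k ≤ n + 1 → ext q.1 k ≠ n + 1) ∧ n + 1 ≤ ext q.1 (n + 1) ∧
      IsRestrictedGrowth n (ext q.2)
  rw [ae_iff]
  refine measure_mono_null ?_ (measure_iUnion_null fun q : {q // Good q} =>
    measure_cyl_inter_label_notMem_eq_zero hproc hα hn q.2.1 q.2.2.1 q.2.2.2)
  rintro ω hω
  simp only [Classical.not_imp] at hω
  obtain ⟨ht, hrg, harr, hbad⟩ := hω
  have hT : ∀ k ≤ n + 1, ext (fun i : Fin (n + 2) => T i ω) k = T k ω := fun k hk =>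
    extend_finVal_apply (T · ω) 0 (by omega)
  have hL : ∀ i ≤ n, ext (fun i : Fin (n + 1) => L i ω) i = L i ω := fun i hi =>
    extend_finVal_apply (L · ω) 0 (by omega)
  have hgood : Good (fun i => T i ω, fun i => L i ω) := by
    refine ⟨fun k hk1 hk2 => ?_, ?_, hrg.congr fun i _ hi => (hL i hi).symm⟩
    · rw [hT k hk2]; exact harr k hk1
    · rw [hT (n + 1) le_rfl]; exact ht.le_apply_s10 (n + 1)
  refine Set.mem_iUnion.2
    ⟨⟨_, hgood⟩, ⟨fun k _ hk => (hT k hk).symm, fun i _ hi => (hL i hi).symm⟩, ?_⟩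
  rwa [Set.mem_preimage, Set.mem_compl_iff, Finset.mem_coe,
    kmaxf_congr n fun i _ hi => hL i hi]

theorem ae_kRV_sandwich (hproc : IsAlphaRandomTProcess α T L) (hα : α < 1) :
    ∀ᵐ ω, ∀ n, 1 ≤ n → T (kRV L n ω) ω ≤ n ∧ n < T (kRV L n ω + 1) ω := by
  have hlt : ∀ᵐ ω, ∀ k, 1 ≤ k → L (T k ω) ω = k :=
    ae_all_iff.2 fun k => by
      by_cases hk : 1 ≤ k
      · filter_upwards [hproc.2.2.1 k hk] with ω h _ using h
      · exact .of_forall fun ω h => absurd h hk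
  have hsel : ∀ᵐ ω, ∀ n, 1 ≤ n → IsArrivalSeq (fun k => T k ω) →
      IsRestrictedGrowth n (fun i => L i ω) → (∀ k, 1 ≤ k → T k ω ≠ n + 1) →
      L (n + 1) ω ∈ Finset.Icc 1 (kRV L n ω) :=
    ae_all_iff.2 fun n => by
      by_cases hn : 1 ≤ n
      · filter_upwards [ae_label_mem_of_not_arrival hproc hα hn] with ω h _ using h
      · exact .of_forall fun ω h => absurd h hn
  filter_upwards [hproc.2.1.2, hlt, hsel] with ω ht hlt hsel n hn
  exact (IsArrivalSeq.kmaxf_sandwich (t := (T · ω)) ht hlt (fun n hn => hsel n hn ht) hn).2.2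

end IsAlphaRandomTProcess

end Selection

lemma tendsto_atTop_of_lt_apply_succ {a K : ℕ → ℕ} (h : ∀ᶠ n in atTop, n < a (K n + 1)) :
    Tendsto K atTop atTop := by
  refine tendsto_atTop.2 fun M => ?_
  filter_upwards [h, eventually_ge_atTop ((Finset.range (M + 1)).sup a)] with n hlt hge
  by_contra! hKM
  have : a (K n + 1) ≤ (Finset.range (M + 1)).sup a :=
    Finset.le_sup (Finset.mem_range.2 (by omega))
  omega

lemma tendsto_apply_succ_mul_rpow_neg {p μ : ℝ} {a : ℕ → ℝ}
    (ha : Tendsto (fun j : ℕ => a j * (j : ℝ) ^ (-p)) atTop (𝓝 μ)) :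
    Tendsto (fun j : ℕ => a (j + 1) * (j : ℝ) ^ (-p)) atTop (𝓝 μ) := by
  have hshift := (tendsto_add_atTop_iff_nat 1).2 ha
  have hratio : Tendsto (fun j : ℕ => ((j : ℝ) / (j + 1)) ^ (-p)) atTop (𝓝 1) := by
    simpa using (tendsto_natCast_div_add_atTop (1 : ℝ)).rpow_const (Or.inl one_ne_zero)
  refine (by simpa using hshift.mul hratio : Tendsto _ _ (𝓝 μ)).congr fun j => ?_
  have hj : (0 : ℝ) < j + 1 := by positivity
  rw [mul_assoc, ← Real.mul_rpow hj.le (by positivity), mul_div_cancel₀ _ hj.ne']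

theorem tendsto_mul_rpow_neg_of_sandwich {p μ : ℝ} {a K : ℕ → ℕ}
    (hK : ∀ᶠ n in atTop, a (K n) ≤ n ∧ n < a (K n + 1))
    (ha : Tendsto (fun j : ℕ => (a j : ℝ) * (j : ℝ) ^ (-p)) atTop (𝓝 μ)) :
    Tendsto (fun n : ℕ => (n : ℝ) * (K n : ℝ) ^ (-p)) atTop (𝓝 μ) := by
  have hK_top := tendsto_atTop_of_lt_apply_succ (hK.mono fun _ h => h.2)
  refine tendsto_of_tendsto_of_tendsto_of_le_of_le' (ha.comp hK_top)
    ((tendsto_apply_succ_mul_rpow_neg ha).comp hK_top) ?_ ?_ <;>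
    filter_upwards [hK] with n hn <;>
    refine mul_le_mul_of_nonneg_right ?_ (Real.rpow_nonneg (Nat.cast_nonneg _) _)
  · exact_mod_cast hn.1
  · exact_mod_cast hn.2.le

theorem stmt_10_general {Ω : Type*} [MeasureSpace Ω] [IsProbabilityMeasure (ℙ : Measure Ω)]
    (α σ μσ : ℝ) (hα : α < 1) (hσ0 : 0 < σ) (hμ : 1 < μσ)
    (T : ℕ → Ω → ℕ) (L : ℕ → Ω → ℕ) (hproc : IsAlphaRandomTProcess α T L)
    (hrate : ∀ᵐ ω,
      Tendsto (fun j : ℕ => (T j ω : ℝ) * (j : ℝ) ^ (-(1 / σ))) atTop (𝓝 μσ)) :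
    (∀ᵐ ω, Tendsto (fun n : ℕ => (kRV L n ω : ℝ) / (n : ℝ) ^ σ) atTop (𝓝 (μσ ^ (-σ)))) ∧
    (∀ᵐ ω, Filter.limsup
        (fun n : ℕ => (n : ℝ) / (kRV L (2 * n) ω : ℝ) ^ (1 / σ)) atTop = μσ / 2) ∧
    (1 / 2 < σ → 1 / σ < 2) := by
  have hK : ∀ᵐ ω, Tendsto (fun n : ℕ => (n : ℝ) * (kRV L n ω : ℝ) ^ (-(1 / σ))) atTop (𝓝 μσ) := by
    filter_upwards [hproc.ae_kRV_sandwich hα, hrate] with ω hsand hT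
    exact tendsto_mul_rpow_neg_of_sandwich ((eventually_ge_atTop 1).mono hsand) hT
  refine ⟨?_, ?_, fun h => by rw [div_lt_iff₀ hσ0]; linarith⟩
  · filter_upwards [hK] with ω hω
    refine (hω.rpow_const (Or.inl (by linarith))).congr fun n => ?_
    rw [Real.mul_rpow (Nat.cast_nonneg _) (Real.rpow_nonneg (Nat.cast_nonneg _) _),
      ← Real.rpow_mul (Nat.cast_nonneg _), show -(1 / σ) * -σ = 1 by field_simp, Real.rpow_one,
      Real.rpow_neg (Nat.cast_nonneg _), div_eq_mul_inv, mul_comm]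
  · filter_upwards [hK] with ω hω
    refine Tendsto.limsup_eq (((hω.comp (tendsto_id.nsmul_atTop two_pos)).div_const 2).congr
      fun n => ?_)
    simp only [Function.comp_apply, id, smul_eq_mul, Nat.cast_mul, Nat.cast_ofNat,
      Real.rpow_neg (Nat.cast_nonneg _)]
    ring

/-- vertex growth and ε-density.  If `T_j j^{-1/σ} → μ_σ` a.s., the number
of vertices satisfies `K_n/n^σ → μ_σ^{-σ}` a.s., and the graph sequence (with `n` edges and
`K_{2n}` vertices) has ε-density `ε = 1/σ`: `limsup n / |V(G_n)|^{1/σ} = μ_σ/2` a.s.;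
in particular it is sparse (`ε < 2`) whenever `σ > 1/2`. -/
theorem stmt_10 {Ω : Type*} [MeasureSpace Ω] [IsProbabilityMeasure (ℙ : Measure Ω)]
    (α σ μσ : ℝ) (hα : α < 1) (hσ0 : 0 < σ) (hσ1 : σ ≤ 1) (hμ : 1 < μσ)
    (T : ℕ → Ω → ℕ) (L : ℕ → Ω → ℕ) (hproc : IsAlphaRandomTProcess α T L)
    (hrate : ∀ᵐ ω,
      Tendsto (fun j : ℕ => (T j ω : ℝ) * (j : ℝ) ^ (-(1 / σ))) atTop (𝓝 μσ)) :
    (∀ᵐ ω, Tendsto (fun n : ℕ => (kRV L n ω : ℝ) / (n : ℝ) ^ σ) atTop (𝓝 (μσ ^ (-σ)))) ∧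
    (∀ᵐ ω, Filter.limsup
        (fun n : ℕ => (n : ℝ) / (kRV L (2 * n) ω : ℝ) ^ (1 / σ)) atTop = μσ / 2) ∧
    (1 / 2 < σ → 1 / σ < 2) :=
  stmt_10_general α σ μσ hα hσ0 hμ T L hproc hrate
end
end
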